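/- Let R be an integral domain, f, g ∈ R⟦t⟧[x_1,...,x_n] nonzero, and w ∈ ℝ_{<0}×ℝ^n. Then in_w(f·g) = in_w(f)·in_w(g). -/

import Mathlib

open MvPolynomial

noncomputable section

variable {R : Type*} [CommRing R] {n : ℕ}

/-- The mixed power-series–polynomial ring `R⟦t⟧[x₁,…,xₙ]`. -/
abbrev MixedRing (R : Type*) [CommRing R] (n : ℕ) :=
  MvPolynomial (Fin n) (PowerSeries R)

/-- The polynomial ring `R[t][x₁,…,xₙ] = R[t,x]`. -/
abbrev PolyRing (R : Type*) [CommRing R] (n : ℕ) :=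
  MvPolynomial (Fin n) (Polynomial R)

/-- A monomial `t^β x^α` is encoded as the pair `(α, β)`. -/
abbrev Mon (n : ℕ) := (Fin n →₀ ℕ) × ℕ

/-- The coefficient of `f ∈ R⟦t⟧[x]` at the monomial `t^β x^α`. -/
def coeffAt (f : MixedRing R n) (m : Mon n) : R :=
  PowerSeries.coeff m.2 (MvPolynomial.coeff m.1 f)

/-- The coefficient of `q ∈ R[t,x]` at the monomial `t^β x^α`. -/
def coeffAtP (q : PolyRing R n) (m : Mon n) : R :=
  (MvPolynomial.coeff m.1 q).coeff m.2

/-- The `w`-weighted degree of the monomial `t^β x^α`, where `w = (w₀, w₁,…,wₙ)`. -/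
def wdeg (w0 : ℝ) (w : Fin n → ℝ) (m : Mon n) : ℝ :=
  w0 * m.2 + ∑ i, w i * (m.1 i : ℝ)

/-- The maximal `w`-weighted degree of a term of `f ∈ R⟦t⟧[x]`
(as a supremum; it is attained when `w₀ < 0` and `f ≠ 0`). -/
def maxdeg (w0 : ℝ) (w : Fin n → ℝ) (f : MixedRing R n) : ℝ :=
  sSup (wdeg w0 w '' {m | coeffAt f m ≠ 0})

/-- The least power of `t` occurring in a power series `s` (junk value `0` for `s = 0`). -/
def tord (s : PowerSeries R) : ℕ :=
  sInf {k | PowerSeries.coeff k s ≠ 0}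

open Classical in
/-- The initial form `in_w(f)` of `f ∈ R⟦t⟧[x]` with respect to the weight
vector `w = (w₀, w) ∈ ℝ_{<0} × ℝⁿ`: the sum of the terms of `f` of maximal
`w`-weighted degree.  Since `w₀ < 0`, for each `x`-monomial `x^α` only the term
of least `t`-order can contribute, so the initial form is a polynomial in
`R[t,x]`. -/
def initialForm (w0 : ℝ) (w : Fin n → ℝ) (f : MixedRing R n) : PolyRing R n :=
  ∑ α ∈ f.support,
    if wdeg w0 w (α, tord (MvPolynomial.coeff α f)) = maxdeg w0 w f then
      MvPolynomial.monomial α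
        (Polynomial.monomial (tord (MvPolynomial.coeff α f))
          (PowerSeries.coeff (tord (MvPolynomial.coeff α f)) (MvPolynomial.coeff α f)))
    else 0

/-- `r` is a `t`-local monomial ordering on `Mon(t,x)`: a strict total order
(`r a b` meaning `a < b`) compatible with the semigroup structure and with
`t < 1` (so that leading monomials — the largest monomials occurring — of unit
power series are `1`). -/
def IsTLocalOrder (r : Mon n → Mon n → Prop) : Prop :=
  (∀ a b, a ≠ b → r a b ∨ r b a) ∧ (∀ a, ¬ r a a) ∧
  (∀ a b c, r a b → r b c → r a c) ∧
  (∀ a b c, r a b → r (a + c) (b + c)) ∧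
  r ((0 : Fin n →₀ ℕ), 1) ((0 : Fin n →₀ ℕ), 0)

/-- `f ∈ R⟦t⟧[x]` has leading term `c · t^β x^α` (with `m = (α,β)`) with respect
to the ordering `r`: the coefficient of `f` at `m` is `c ≠ 0` and every other
monomial occurring in `f` is `r`-smaller than `m`. -/
def IsLeadingTerm (r : Mon n → Mon n → Prop) (f : MixedRing R n) (m : Mon n) (c : R) : Prop :=
  coeffAt f m = c ∧ c ≠ 0 ∧ ∀ m', coeffAt f m' ≠ 0 → m' = m ∨ r m' m

/-- Leading-term predicate for elements of `R[t,x]`. -/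
def IsLeadingTermP (r : Mon n → Mon n → Prop) (q : PolyRing R n) (m : Mon n) (c : R) : Prop :=
  coeffAtP q m = c ∧ c ≠ 0 ∧ ∀ m', coeffAtP q m' ≠ 0 → m' = m ∨ r m' m

/-- The term `c · t^β x^α` as an element of `R[t,x]`. -/
def termA (m : Mon n) (c : R) : PolyRing R n :=
  MvPolynomial.monomial m.1 (Polynomial.monomial m.2 c)

/-- The leading ideal `lt_>(I) ⊆ R[t,x]` of an ideal `I ⊆ R⟦t⟧[x]`. -/
def ltIdeal (r : Mon n → Mon n → Prop) (I : Ideal (MixedRing R n)) : Ideal (PolyRing R n) :=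
  Ideal.span {q | ∃ f ∈ I, ∃ m c, IsLeadingTerm r f m c ∧ q = termA m c}

/-- The ideal of `R[t,x]` generated by the leading terms of a finite set `G ⊆ R⟦t⟧[x]`. -/
def ltSpan (r : Mon n → Mon n → Prop) (G : Finset (MixedRing R n)) : Ideal (PolyRing R n) :=
  Ideal.span {q | ∃ f ∈ G, ∃ m c, IsLeadingTerm r f m c ∧ q = termA m c}

/-- The leading ideal of an ideal `J ⊆ R[t,x]`. -/
def ltIdealP (r : Mon n → Mon n → Prop) (J : Ideal (PolyRing R n)) : Ideal (PolyRing R n) :=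
  Ideal.span {q | ∃ f ∈ J, ∃ m c, IsLeadingTermP r f m c ∧ q = termA m c}

/-- The initial ideal `in_w(I) ⊆ R[t,x]` of an ideal `I ⊆ R⟦t⟧[x]`. -/
def initialIdeal (w0 : ℝ) (w : Fin n → ℝ) (I : Ideal (MixedRing R n)) : Ideal (PolyRing R n) :=
  Ideal.span {q | ∃ f ∈ I, q = initialForm w0 w f}

/-- `f ∈ R⟦t⟧[x]` is `x`-homogeneous: all monomials occurring in `f` have the
same total degree in the variables `x₁,…,xₙ`. -/
def IsXHomogeneous (f : MixedRing R n) : Prop :=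
  ∃ d, ∀ α ∈ f.support, (α.sum fun _ e => e) = d

/-- An ideal `I ⊆ R⟦t⟧[x]` is `x`-homogeneous if it is generated by
`x`-homogeneous elements. -/
def Ideal.IsXHomogeneousIdeal (I : Ideal (MixedRing R n)) : Prop :=
  ∃ S : Set (MixedRing R n), (∀ f ∈ S, IsXHomogeneous f) ∧ I = Ideal.span S

/-- The `t`-initial truncation `Σ_α lt_>(g_α)·x^α` of `g = Σ_α g_α·x^α ∈ R⟦t⟧[x]`,
keeping for each `x`-monomial only the term of least `t`-power. -/
def tTrunc (g : MixedRing R n) : MixedRing R n :=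
  ∑ α ∈ g.support,
    MvPolynomial.monomial α
      ((PowerSeries.monomial (tord (MvPolynomial.coeff α g)))
        (PowerSeries.coeff (tord (MvPolynomial.coeff α g)) (MvPolynomial.coeff α g)))

/-- `G` is a standard basis of the ideal `I ⊆ R⟦t⟧[x]` with respect to `r`:
`G ⊆ I` and the leading terms of the elements of `G` generate the leading
ideal of `I`. -/
def IsStandardBasis (r : Mon n → Mon n → Prop) (I : Ideal (MixedRing R n))
    (G : Finset (MixedRing R n)) : Prop :=
  ↑G ⊆ (I : Set (MixedRing R n)) ∧ ltSpan r G = ltIdeal r I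

open Classical in
/-- `G` is an initially reduced standard basis of `I` w.r.t. `r`: a standard
basis that is minimal and such that no term of the `t`-initial truncation of
any `g ∈ G`, other than the leading term of `g`, lies in the leading ideal. -/
def IsInitiallyReducedSB (r : Mon n → Mon n → Prop) (I : Ideal (MixedRing R n))
    (G : Finset (MixedRing R n)) : Prop :=
  IsStandardBasis r I G ∧
  (∀ g ∈ G, ltSpan r (G.erase g) ≠ ltSpan r G) ∧
  (∀ g ∈ G, ∀ m, coeffAt (tTrunc g) m ≠ 0 → ¬ (∃ c, IsLeadingTerm r g m c) →
    termA m (coeffAt (tTrunc g) m) ∉ ltIdeal r I)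

/-- The (interior part of the) Gröbner cone `C_>(I)`: the Euclidean closure of
the set of weight vectors `v ∈ ℝ_{<0} × ℝⁿ` with `in_v(I) = lt_>(I)`. -/
def groebnerCone (r : Mon n → Mon n → Prop) (I : Ideal (MixedRing R n)) :
    Set (ℝ × (Fin n → ℝ)) :=
  closure {v : ℝ × (Fin n → ℝ) | v.1 < 0 ∧ initialIdeal v.1 v.2 I = ltIdeal r I}

/-!
Since `w₀ < 0`, each `x`-monomial `x^α` of `f` reaches its largest weight at the lowest power
of `t` in its coefficient, so the maximal weight `D_f` of `f` is attained and the coefficients of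
`in_w(f)` are exactly those of `f` of weight `D_f`. A coefficient of `f·g` of weight `D_f + D_g`
only receives contributions from pairs of top-weight terms of `f` and `g`, so it agrees with the
corresponding coefficient of `in_w(f)·in_w(g)`, and all coefficients of the latter have this
weight. Over a domain `in_w(f)·in_w(g) ≠ 0`, so `D_f + D_g` is the maximal weight of `f·g`.
-/

open Finset.HasAntidiagonal

variable {w0 : ℝ} {w : Fin n → ℝ} {f g : MixedRing R n}

lemma wdeg_add (a b : Mon n) : wdeg w0 w (a + b) = wdeg w0 w a + wdeg w0 w b := by
  simp only [wdeg, Prod.fst_add, Prod.snd_add, Finsupp.coe_add, Pi.add_apply]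
  push_cast
  simp only [mul_add, Finset.sum_add_distrib]
  ring

lemma wdeg_strictAnti_snd (hw0 : w0 < 0) (α : Fin n →₀ ℕ) :
    StrictAnti fun β : ℕ => wdeg w0 w (α, β) := fun β β' h => by
  have : w0 * (β' : ℝ) < w0 * β := mul_lt_mul_of_neg_left (by exact_mod_cast h) hw0
  simp only [wdeg]
  linarith

lemma tord_le {s : PowerSeries R} {k : ℕ} (h : PowerSeries.coeff k s ≠ 0) : tord s ≤ k :=
  Nat.sInf_le h

lemma coeff_tord_ne_zero {s : PowerSeries R} (hs : s ≠ 0) : PowerSeries.coeff (tord s) s ≠ 0 :=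
  Nat.sInf_mem (PowerSeries.exists_coeff_ne_zero_iff_ne_zero.mpr hs)

lemma coeffAtP_ext {p q : PolyRing R n} (h : ∀ m, coeffAtP p m = coeffAtP q m) : p = q :=
  MvPolynomial.ext _ _ fun α => Polynomial.ext fun k => h (α, k)

lemma exists_coeffAtP_ne_zero {q : PolyRing R n} (hq : q ≠ 0) : ∃ m, coeffAtP q m ≠ 0 := by
  by_contra! h
  exact hq (coeffAtP_ext fun m => (h m).trans (by simp [coeffAtP]))

lemma add_eq_of_mem_antidiagonal {m : Mon n} {p : (Fin n →₀ ℕ) × (Fin n →₀ ℕ)}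
    {q : ℕ × ℕ} (hp : p ∈ antidiagonal m.1) (hq : q ∈ antidiagonal m.2) :
    ((p.1, q.1) : Mon n) + (p.2, q.2) = m :=
  Prod.ext (mem_antidiagonal.mp hp) (mem_antidiagonal.mp hq)

lemma coeffAt_mul (f g : MixedRing R n) (m : Mon n) :
    coeffAt (f * g) m = ∑ p ∈ antidiagonal m.1, ∑ q ∈ antidiagonal m.2,
      coeffAt f (p.1, q.1) * coeffAt g (p.2, q.2) := by
  rw [coeffAt, MvPolynomial.coeff_mul, map_sum]
  exact Finset.sum_congr rfl fun p _ => PowerSeries.coeff_mul _ _ _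

lemma coeffAtP_mul (F G : PolyRing R n) (m : Mon n) :
    coeffAtP (F * G) m = ∑ p ∈ antidiagonal m.1, ∑ q ∈ antidiagonal m.2,
      coeffAtP F (p.1, q.1) * coeffAtP G (p.2, q.2) := by
  rw [coeffAtP, MvPolynomial.coeff_mul, Polynomial.finsetSum_coeff]
  exact Finset.sum_congr rfl fun p _ => Polynomial.coeff_mul _ _ _

lemma exists_add_eq_of_coeffAt_mul_ne_zero {m : Mon n} (h : coeffAt (f * g) m ≠ 0) :
    ∃ a b, a + b = m ∧ coeffAt f a ≠ 0 ∧ coeffAt g b ≠ 0 := by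
  rw [coeffAt_mul] at h
  obtain ⟨p, hp, h⟩ := Finset.exists_ne_zero_of_sum_ne_zero h
  obtain ⟨q, hq, h⟩ := Finset.exists_ne_zero_of_sum_ne_zero h
  exact ⟨_, _, add_eq_of_mem_antidiagonal hp hq, left_ne_zero_of_mul h, right_ne_zero_of_mul h⟩

lemma exists_add_eq_of_coeffAtP_mul_ne_zero {F G : PolyRing R n} {m : Mon n}
    (h : coeffAtP (F * G) m ≠ 0) :
    ∃ a b, a + b = m ∧ coeffAtP F a ≠ 0 ∧ coeffAtP G b ≠ 0 := by
  rw [coeffAtP_mul] at h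
  obtain ⟨p, hp, h⟩ := Finset.exists_ne_zero_of_sum_ne_zero h
  obtain ⟨q, hq, h⟩ := Finset.exists_ne_zero_of_sum_ne_zero h
  exact ⟨_, _, add_eq_of_mem_antidiagonal hp hq, left_ne_zero_of_mul h, right_ne_zero_of_mul h⟩

lemma coeffAt_mul_eq_coeffAtP_mul {F G : PolyRing R n} {m : Mon n}
    (h : ∀ a b, a + b = m → coeffAt f a * coeffAt g b = coeffAtP F a * coeffAtP G b) :
    coeffAt (f * g) m = coeffAtP (F * G) m := by
  rw [coeffAt_mul, coeffAtP_mul]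
  exact Finset.sum_congr rfl fun p hp => Finset.sum_congr rfl fun q hq =>
    h _ _ (add_eq_of_mem_antidiagonal hp hq)

lemma coeff_initialForm (α : Fin n →₀ ℕ) :
    coeff α (initialForm w0 w f) =
      if wdeg w0 w (α, tord (coeff α f)) = maxdeg w0 w f then
        Polynomial.monomial (tord (coeff α f)) (PowerSeries.coeff (tord (coeff α f)) (coeff α f))
      else 0 := by
  classical
  rw [initialForm, coeff_sum]
  by_cases hα : α ∈ f.support
  · rw [Finset.sum_eq_single_of_mem α hα fun β _ hβ => by
      split_ifs <;> simp [coeff_monomial, hβ]]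
    split_ifs <;> simp
  · rw [Finset.sum_eq_zero fun β hβ => by
      split_ifs <;> simp [coeff_monomial, show β ≠ α by rintro rfl; exact hα hβ]]
    simp [notMem_support_iff.mp hα]

lemma isGreatest_maxdeg (hw0 : w0 < 0) (hf : f ≠ 0) :
    IsGreatest (wdeg w0 w '' {m | coeffAt f m ≠ 0}) (maxdeg w0 w f) := by
  let D := f.support.sup' (support_nonempty.mpr hf) fun α => wdeg w0 w (α, tord (coeff α f))
  have hD : IsGreatest (wdeg w0 w '' {m | coeffAt f m ≠ 0}) D := by
    constructor
    · obtain ⟨α, hα, hαD⟩ := Finset.exists_mem_eq_sup' (support_nonempty.mpr hf)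
        fun α => wdeg w0 w (α, tord (coeff α f))
      exact ⟨_, coeff_tord_ne_zero (mem_support_iff.mp hα), hαD.symm⟩
    · rintro _ ⟨⟨α, β⟩, hm, rfl⟩
      have hα : coeff α f ≠ 0 := fun h0 => hm (by simp [coeffAt, h0])
      calc wdeg w0 w (α, β) ≤ wdeg w0 w (α, tord (coeff α f)) :=
            (wdeg_strictAnti_snd hw0 α).antitone (tord_le hm)
        _ ≤ D := Finset.le_sup' (fun α => wdeg w0 w (α, tord (coeff α f)))
            (mem_support_iff.mpr hα)
  rw [maxdeg, hD.csSup_eq]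
  exact hD

lemma wdeg_le_maxdeg (hw0 : w0 < 0) (hf : f ≠ 0) {m : Mon n} (h : coeffAt f m ≠ 0) :
    wdeg w0 w m ≤ maxdeg w0 w f :=
  (isGreatest_maxdeg hw0 hf).2 ⟨m, h, rfl⟩

lemma coeffAtP_initialForm (hw0 : w0 < 0) (hf : f ≠ 0) (m : Mon n) :
    coeffAtP (initialForm w0 w f) m =
      if wdeg w0 w m = maxdeg w0 w f then coeffAt f m else 0 := by
  obtain ⟨α, β⟩ := m
  rw [coeffAtP, coeff_initialForm]
  dsimp only
  by_cases hβ : tord (coeff α f) = β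
  · rw [hβ]
    split_ifs <;> simp [coeffAt]
  simp only [apply_ite (fun p : Polynomial R => p.coeff β), Polynomial.coeff_monomial, if_neg hβ,
    Polynomial.coeff_zero, ite_self]
  split_ifs with hdeg
  · symm
    by_contra hc
    have hα : coeff α f ≠ 0 := fun h0 => hc (by simp [coeffAt, h0])
    have hlt : wdeg w0 w (α, β) < wdeg w0 w (α, tord (coeff α f)) :=
      wdeg_strictAnti_snd hw0 α (lt_of_le_of_ne (tord_le hc) hβ)
    have hle : wdeg w0 w (α, tord (coeff α f)) ≤ maxdeg w0 w f :=
      wdeg_le_maxdeg hw0 hf (coeff_tord_ne_zero hα)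
    linarith
  · rfl

lemma initialForm_ne_zero (hw0 : w0 < 0) (hf : f ≠ 0) : initialForm w0 w f ≠ 0 := by
  obtain ⟨m, hm, hdeg⟩ := (isGreatest_maxdeg (w := w) hw0 hf).1
  intro h
  have := coeffAtP_initialForm (w := w) hw0 hf m
  rw [h, if_pos hdeg] at this
  exact hm (by simpa [coeffAtP] using this.symm)

lemma coeffAtP_initialForm_mul (hw0 : w0 < 0) (hf : f ≠ 0) (hg : g ≠ 0) (m : Mon n) :
    coeffAtP (initialForm w0 w f * initialForm w0 w g) m =
      if wdeg w0 w m = maxdeg w0 w f + maxdeg w0 w g then coeffAt (f * g) m else 0 := by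
  split_ifs with hm
  · refine (coeffAt_mul_eq_coeffAtP_mul fun a b hab => ?_).symm
    have hsum : wdeg w0 w a + wdeg w0 w b = maxdeg w0 w f + maxdeg w0 w g := by
      rw [← wdeg_add, hab, hm]
    rw [coeffAtP_initialForm hw0 hf, coeffAtP_initialForm hw0 hg]
    by_cases ha : wdeg w0 w a = maxdeg w0 w f
    · rw [if_pos ha, if_pos (by linarith)]
    · rw [if_neg ha, zero_mul]
      by_contra hne
      have hfa : wdeg w0 w a ≤ maxdeg w0 w f := wdeg_le_maxdeg hw0 hf (left_ne_zero_of_mul hne)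
      have hgb : wdeg w0 w b ≤ maxdeg w0 w g := wdeg_le_maxdeg hw0 hg (right_ne_zero_of_mul hne)
      exact ha (by linarith)
  · by_contra hne
    obtain ⟨a, b, rfl, ha, hb⟩ := exists_add_eq_of_coeffAtP_mul_ne_zero hne
    have hfa : wdeg w0 w a = maxdeg w0 w f := by
      by_contra h
      rw [coeffAtP_initialForm hw0 hf, if_neg h] at ha
      exact ha rfl
    have hgb : wdeg w0 w b = maxdeg w0 w g := by
      by_contra h
      rw [coeffAtP_initialForm hw0 hg, if_neg h] at hb
      exact hb rfl
    exact hm (by rw [wdeg_add, hfa, hgb])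

lemma maxdeg_mul [IsDomain R] (hw0 : w0 < 0) (hf : f ≠ 0) (hg : g ≠ 0) :
    maxdeg w0 w (f * g) = maxdeg w0 w f + maxdeg w0 w g := by
  refine IsGreatest.csSup_eq ⟨?_, ?_⟩
  · obtain ⟨m, hm⟩ := exists_coeffAtP_ne_zero
      (mul_ne_zero (initialForm_ne_zero (w := w) hw0 hf) (initialForm_ne_zero hw0 hg))
    rw [coeffAtP_initialForm_mul hw0 hf hg] at hm
    split_ifs at hm with hdeg
    · exact ⟨m, hm, hdeg⟩
    · exact absurd rfl hm
  · rintro _ ⟨m, hm, rfl⟩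
    obtain ⟨a, b, rfl, ha, hb⟩ := exists_add_eq_of_coeffAt_mul_ne_zero hm
    rw [wdeg_add]
    exact add_le_add (wdeg_le_maxdeg hw0 hf ha) (wdeg_le_maxdeg hw0 hg hb)

/-- Over an integral domain, initial forms are multiplicative:
`in_w(f·g) = in_w(f)·in_w(g)` for nonzero `f, g ∈ R⟦t⟧[x]` and
`w ∈ ℝ_{<0} × ℝⁿ`. -/
theorem initialForm_mul {R : Type*} [CommRing R] [IsDomain R] {n : ℕ}
    (f g : MixedRing R n) (hf : f ≠ 0) (hg : g ≠ 0)
    (w0 : ℝ) (hw0 : w0 < 0) (w : Fin n → ℝ) :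
    initialForm w0 w (f * g) = initialForm w0 w f * initialForm w0 w g :=
  coeffAtP_ext fun m => by
    rw [coeffAtP_initialForm hw0 (mul_ne_zero hf hg), maxdeg_mul hw0 hf hg,
      coeffAtP_initialForm_mul hw0 hf hg]
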